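/- arXiv:2004.09624 — 2 statements merged into one kernel-verified Lean document; each statement's English description precedes it below -/
import Mathlib

section
/- (Resonance identity for the v-equation nonlinearity.) Let 0 < α < 1 and set r₁ = (3α − √(3α(4−α)))/(2(α−1)) and r₂ = (3α + √(3α(4−α)))/(2(α−1)). Then for all real ξ, ξ₁, ξ₂, τ, τ₁, τ₂ with ξ = ξ₁ + ξ₂ and τ = τ₁ + τ₂: (τ − ξ³) − (τ₁ − αξ₁³) − (τ₂ − αξ₂³) = (α − 1) ξ (ξ − r₁ξ₁)(ξ − r₂ξ₁). Moreover, for 0 < α < 1 one has r₁ > 0 and r₂ < 0 (in particular both are nonzero and not equal to 1). -/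
open MeasureTheory Complex Real Filter
open scoped ENNReal Topology

noncomputable section

/-- Fourier transform with convention `ĝ(ξ) = ∫ e^{-ixξ} g(x) dx`. -/
def FT (g : ℝ → ℂ) (ξ : ℝ) : ℂ := ∫ x : ℝ, Complex.exp (-(Complex.I * x * ξ)) * g x

/-- Japanese bracket `⟨ξ⟩ = 1 + |ξ|`. -/
def jb (ξ : ℝ) : ℝ := 1 + |ξ|

/-- Sobolev `H^s(ℝ)` norm: `‖⟨ξ⟩^s ĝ‖_{L²}`. -/
def HNorm (s : ℝ) (g : ℝ → ℂ) : ℝ≥0∞ :=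
  (∫⁻ ξ : ℝ, ENNReal.ofReal (jb ξ ^ (2*s) * ‖FT g ξ‖^2)) ^ (1/2 : ℝ)

/-- Sobolev `H^s(ℝ⁺)` norm: infimum of `H^s(ℝ)` norms over all extensions. -/
def HPlusNorm (s : ℝ) (h : ℝ → ℂ) : ℝ≥0∞ :=
  ⨅ g : {g : ℝ → ℂ // ∀ x > (0:ℝ), g x = h x}, HNorm s g.1

/-- Space-time Fourier transform `û(ξ,τ) = ∫∫ e^{-i(xξ+tτ)} u(x,t) dx dt`. -/
def FT2 (u : ℝ × ℝ → ℂ) (ξ τ : ℝ) : ℂ :=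
  ∫ x : ℝ, ∫ t : ℝ, Complex.exp (-(Complex.I * (x*ξ + t*τ))) * u (x, t)

/-- Bourgain norm `X^{s,b}` (for the `τ = ξ³` dispersion). -/
def XNorm (s b : ℝ) (u : ℝ × ℝ → ℂ) : ℝ≥0∞ :=
  (∫⁻ ξ : ℝ, ∫⁻ τ : ℝ,
    ENNReal.ofReal (jb ξ ^ (2*s) * jb (τ - ξ^3) ^ (2*b) * ‖FT2 u ξ τ‖^2)) ^ (1/2 : ℝ)

/-- Bourgain norm `X^{s,b}_α` (for the `τ = αξ³` dispersion). -/
def XNormA (α s b : ℝ) (u : ℝ × ℝ → ℂ) : ℝ≥0∞ :=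
  (∫⁻ ξ : ℝ, ∫⁻ τ : ℝ,
    ENNReal.ofReal (jb ξ ^ (2*s) * jb (τ - α*ξ^3) ^ (2*b) * ‖FT2 u ξ τ‖^2)) ^ (1/2 : ℝ)

/-- Low-frequency norm `V^γ`. -/
def VNorm (γ : ℝ) (u : ℝ × ℝ → ℂ) : ℝ≥0∞ :=
  (∫⁻ ξ : ℝ, ∫⁻ τ : ℝ,
    (if |ξ| ≤ 1 then ENNReal.ofReal (jb τ ^ (2*γ) * ‖FT2 u ξ τ‖^2) else 0)) ^ (1/2 : ℝ)

/-- Airy propagator `(W^t g)(x) = (1/2π) ∫ e^{ixξ} e^{itξ³} ĝ(ξ) dξ`. -/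
def Airy (g : ℝ → ℂ) (t x : ℝ) : ℂ :=
  ((1 / (2*Real.pi) : ℝ) : ℂ) * ∫ ξ : ℝ, Complex.exp (Complex.I * (x*ξ + t*ξ^3)) * FT g ξ

/-- Duhamel term `∫₀ᵗ (W^{t-t'} F(·,t'))(x) dt'`. -/
def Duhamel (F : ℝ × ℝ → ℂ) (t x : ℝ) : ℂ :=
  ∫ t' in (0:ℝ)..t, Airy (fun y => F (y, t')) (t - t') x

/-- Boundary operator
`(W₁h)(x,t) = (3/2π) ∫₀^∞ e^{β(-√3/2 - i/2)x} e^{iβ³t} ρ(βx) β² ĥ(β³) dβ`,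
where `ĥ` is the Fourier transform of `χ_{[0,∞)} h`. -/
def W1 (ρ : ℝ → ℝ) (h : ℝ → ℂ) (x t : ℝ) : ℂ :=
  ((3 / (2*Real.pi) : ℝ) : ℂ) * ∫ β in Set.Ioi (0:ℝ),
    Complex.exp ((β : ℂ) * (((-(Real.sqrt 3)/2 : ℝ) : ℂ) - Complex.I/2) * (x : ℂ)) *
    Complex.exp (Complex.I * (β:ℂ)^3 * (t:ℂ)) * ((ρ (β*x) : ℝ) : ℂ) * (β:ℂ)^2 *
    FT (fun y => if 0 ≤ y then h y else 0) (β^3)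

/-- `η` is a smooth compactly supported cutoff equal to `1` on `[-1,1]`. -/
def IsCutoff (η : ℝ → ℝ) : Prop :=
  ContDiff ℝ (⊤ : ℕ∞) η ∧ HasCompactSupport η ∧ ∀ t ∈ Set.Icc (-1:ℝ) 1, η t = 1

/-- `ρ` is a smooth function with `ρ ≡ 1` on `[0,∞)` and support contained in `(-2,∞)`. -/
def IsBdryBump (ρ : ℝ → ℝ) : Prop :=
  ContDiff ℝ (⊤ : ℕ∞) ρ ∧ Function.support ρ ⊆ Set.Ioi (-2 : ℝ) ∧ ∀ x ≥ (0:ℝ), ρ x = 1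

/-- resonance identity for the `v`-equation nonlinearity:
`(τ-ξ³) - (τ₁-αξ₁³) - (τ₂-αξ₂³) = (α-1) ξ (ξ-r₁ξ₁)(ξ-r₂ξ₁)` whenever
`ξ = ξ₁+ξ₂`, `τ = τ₁+τ₂`; moreover `r₁ > 0` and `r₂ < 0` for `0 < α < 1`. -/
theorem resonance_identity_v (α : ℝ) (hα0 : 0 < α) (hα1 : α < 1) (r₁ r₂ : ℝ)
    (hr₁ : r₁ = (3*α - Real.sqrt (3*α*(4 - α))) / (2*(α - 1)))
    (hr₂ : r₂ = (3*α + Real.sqrt (3*α*(4 - α))) / (2*(α - 1))) :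
    (∀ ξ ξ₁ ξ₂ τ τ₁ τ₂ : ℝ, ξ = ξ₁ + ξ₂ → τ = τ₁ + τ₂ →
      (τ - ξ^3) - (τ₁ - α*ξ₁^3) - (τ₂ - α*ξ₂^3) =
        (α - 1) * ξ * (ξ - r₁*ξ₁) * (ξ - r₂*ξ₁)) ∧
    0 < r₁ ∧ r₂ < 0 := by
  have hprod : (0:ℝ) < 3*α*(4 - α) := by nlinarith
  have hs2 : Real.sqrt (3*α*(4 - α)) ^ 2 = 3*α*(4 - α) := Real.sq_sqrt hprod.le
  have hsgt : 3*α < Real.sqrt (3*α*(4 - α)) := by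
    nlinarith [Real.sqrt_nonneg (3*α*(4 - α)), hs2]
  have hspos : 0 < Real.sqrt (3*α*(4 - α)) := by linarith
  have hden : α - 1 ≠ 0 := by linarith
  generalize hE : Real.sqrt (3*α*(4 - α)) = s at hs2 hsgt hspos hr₁ hr₂
  refine ⟨?_, ?_, ?_⟩
  · intro ξ ξ₁ ξ₂ τ τ₁ τ₂ hξ hτ
    subst hξ hτ hr₁ hr₂
    field_simp
    linear_combination ((ξ₁ + ξ₂) * ξ₁^2) * hs2
  · rw [hr₁]
    apply div_pos_of_neg_of_neg <;> nlinarith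
  · rw [hr₂]
    apply div_neg_of_pos_of_neg <;> nlinarith
end
end

section
/- (Resonance identity for the u-equation nonlinearity.) Let 0 < α < 1 and set r₁ = (3α − √(3α(4−α)))/(2(α−1)) and r₂ = (3α + √(3α(4−α)))/(2(α−1)); note r₁, r₂ ≠ 0 for 0 < α < 1. Then for all real ξ, ξ₁, ξ₂, τ, τ₁, τ₂ with ξ = ξ₁ + ξ₂ and τ = τ₁ + τ₂: (τ₁ − ξ₁³) + (τ₂ − αξ₂³) − (τ − αξ³) = (α − 1) r₁ r₂ ξ₁ (ξ − ξ₁/r₁)(ξ − ξ₁/r₂). -/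
open MeasureTheory Complex Real Filter
open scoped ENNReal Topology

noncomputable section

/-- resonance identity for the `u`-equation nonlinearity:
`(τ₁-ξ₁³) + (τ₂-αξ₂³) - (τ-αξ³) = (α-1) r₁ r₂ ξ₁ (ξ-ξ₁/r₁)(ξ-ξ₁/r₂)` whenever
`ξ = ξ₁+ξ₂`, `τ = τ₁+τ₂`; here `r₁, r₂ ≠ 0` for `0 < α < 1`. -/
theorem resonance_identity_u (α : ℝ) (hα0 : 0 < α) (hα1 : α < 1) (r₁ r₂ : ℝ)
    (hr₁ : r₁ = (3*α - Real.sqrt (3*α*(4 - α))) / (2*(α - 1)))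
    (hr₂ : r₂ = (3*α + Real.sqrt (3*α*(4 - α))) / (2*(α - 1))) :
    (r₁ ≠ 0 ∧ r₂ ≠ 0) ∧
    (∀ ξ ξ₁ ξ₂ τ τ₁ τ₂ : ℝ, ξ = ξ₁ + ξ₂ → τ = τ₁ + τ₂ →
      (τ₁ - ξ₁^3) + (τ₂ - α*ξ₂^3) - (τ - α*ξ^3) =
        (α - 1) * r₁ * r₂ * ξ₁ * (ξ - ξ₁/r₁) * (ξ - ξ₁/r₂)) := by

  set s := Real.sqrt (3*α*(4 - α)) with hs
  have hs0 : 0 ≤ s := Real.sqrt_nonneg _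
  have hs2 : s^2 = 3*α*(4 - α) := Real.sq_sqrt (by nlinarith)
  have hden : 2*(α - 1) ≠ 0 := by intro h; nlinarith
  have hsgt : 3*α < s := by nlinarith
  have hr1ne : r₁ ≠ 0 := by
    rw [hr₁]
    exact div_ne_zero (by nlinarith) hden
  have hr2ne : r₂ ≠ 0 := by
    rw [hr₂]
    exact div_ne_zero (by nlinarith) hden
  have hα1' : α - 1 ≠ 0 := by intro h; nlinarith
  have hprod : (α - 1)*(r₁*r₂) = 3*α := by
    rw [hr₁, hr₂]; field_simp; nlinarith
  have hsum : (α - 1)*(r₁ + r₂) = 3*α := by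
    rw [hr₁, hr₂]; field_simp; ring
  refine ⟨⟨hr1ne, hr2ne⟩, ?_⟩
  intro ξ ξ₁ ξ₂ τ τ₁ τ₂ h1 h2
  subst h1 h2
  have e : (α - 1) * r₁ * r₂ * ξ₁ * (ξ₁ + ξ₂ - ξ₁/r₁) * (ξ₁ + ξ₂ - ξ₁/r₂) =
      ξ₁*((α - 1)*(r₁*r₂)*(ξ₁+ξ₂)^2 - (α - 1)*(r₁+r₂)*(ξ₁+ξ₂)*ξ₁ + (α - 1)*ξ₁^2) := by
    field_simp; ring
  rw [e, hprod, hsum]; ring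
end
end
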